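/- A connected simple graph G is 2K2-free if and only if G contains no induced subgraph isomorphic to any of the following three graphs: (H1) the path P5 on five vertices; (H2) the tadpole graph consisting of a triangle together with a path of length two attached to one vertex of the triangle (five vertices u,v,w,x,y with edges uv, uw, vw, wx, xy and no other edges); (H3) the bowtie graph consisting of two triangles sharing exactly one common vertex (five vertices u,v,w,x,y with edges uv, uw, vw, wx, wy, xy and no other edges). -/

import Mathlib

open SimpleGraph

/-- A simple graph is `2K₂`-free: there are no four pairwise distinct vertices `a b c d`
with `ab` and `cd` edges and none of `ac, ad, bc, bd` an edge. -/
def TwoK2Free {V : Type*} (G : SimpleGraph V) : Prop :=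
  ¬ ∃ a b c d : V, a ≠ b ∧ a ≠ c ∧ a ≠ d ∧ b ≠ c ∧ b ≠ d ∧ c ≠ d ∧
    G.Adj a b ∧ G.Adj c d ∧ ¬ G.Adj a c ∧ ¬ G.Adj a d ∧ ¬ G.Adj b c ∧ ¬ G.Adj b d

/-- `H₂`: a triangle `0 1 2` with a path of length two `2 - 3 - 4` attached. -/
def graphH2 : SimpleGraph (Fin 5) :=
  SimpleGraph.fromRel (fun i j =>
    (i = 0 ∧ j = 1) ∨ (i = 0 ∧ j = 2) ∨ (i = 1 ∧ j = 2) ∨ (i = 2 ∧ j = 3) ∨ (i = 3 ∧ j = 4))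

/-- `H₃` (the bowtie): two triangles `0 1 2` and `2 3 4` sharing the vertex `2`. -/
def graphH3 : SimpleGraph (Fin 5) :=
  SimpleGraph.fromRel (fun i j =>
    (i = 0 ∧ j = 1) ∨ (i = 0 ∧ j = 2) ∨ (i = 1 ∧ j = 2) ∨ (i = 2 ∧ j = 3) ∨
    (i = 2 ∧ j = 4) ∨ (i = 3 ∧ j = 4))

/-!
Each of `P₅`, `H₂`, `H₃` has an induced `2K₂` on its vertices `0 1 3 4`, and induced `2K₂`s are
carried along graph embeddings. Conversely, among all induced `2K₂`s `ab, cd` choose one with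
`dist b c` minimal; swapping `a` and `b` shows `dist b c ≤ dist a c` as well. If `dist b c ≥ 3`,
take `p₂, p₃` on a geodesic from `b` to `c`, at distance `dist b c - 2` and `dist b c - 3` from
`c`. Adjacent vertices have distances to `c` differing by at most one, so neither is adjacent to
`a` or `b`, and `ab, p₂p₃` is an induced `2K₂` with `dist b p₂ ≤ 2`, contradicting minimality.
Connectedness gives `dist b c ≥ 2`, so `b` and `c` have a common neighbour `p`, and `a b p c d`
induces `P₅`, `H₂` or `H₃` according to which of `ap`, `pd` are edges.
-/

namespace SimpleGraph

variable {V : Type*} {G : SimpleGraph V} {a b c d p u v w : V}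

structure IsInducedTwoK2 (G : SimpleGraph V) (a b c d : V) : Prop where
  adj_ab : G.Adj a b
  adj_cd : G.Adj c d
  not_adj_ac : ¬ G.Adj a c
  not_adj_ad : ¬ G.Adj a d
  not_adj_bc : ¬ G.Adj b c
  not_adj_bd : ¬ G.Adj b d

namespace IsInducedTwoK2

theorem swap_left (h : G.IsInducedTwoK2 a b c d) : G.IsInducedTwoK2 b a c d :=
  ⟨h.adj_ab.symm, h.adj_cd, h.not_adj_bc, h.not_adj_bd, h.not_adj_ac, h.not_adj_ad⟩

theorem reverse (h : G.IsInducedTwoK2 a b c d) : G.IsInducedTwoK2 d c b a :=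
  ⟨h.adj_cd.symm, h.adj_ab.symm, fun h' => h.not_adj_bd h'.symm, fun h' => h.not_adj_ad h'.symm,
    fun h' => h.not_adj_bc h'.symm, fun h' => h.not_adj_ac h'.symm⟩

theorem ne_ac (h : G.IsInducedTwoK2 a b c d) : a ≠ c := by
  rintro rfl; exact h.not_adj_ad h.adj_cd

theorem ne_ad (h : G.IsInducedTwoK2 a b c d) : a ≠ d := by
  rintro rfl; exact h.not_adj_ac h.adj_cd.symm

theorem ne_bc (h : G.IsInducedTwoK2 a b c d) : b ≠ c := h.swap_left.ne_ac

theorem ne_bd (h : G.IsInducedTwoK2 a b c d) : b ≠ d := h.swap_left.ne_ad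

theorem map {W : Type*} {H : SimpleGraph W} (f : G ↪g H) (h : G.IsInducedTwoK2 a b c d) :
    H.IsInducedTwoK2 (f a) (f b) (f c) (f d) := by
  refine ⟨?_, ?_, ?_, ?_, ?_, ?_⟩ <;> simp only [f.map_adj_iff]
  exacts [h.adj_ab, h.adj_cd, h.not_adj_ac, h.not_adj_ad, h.not_adj_bc, h.not_adj_bd]

end IsInducedTwoK2

theorem isInducedTwoK2_pathGraph_five : (pathGraph 5).IsInducedTwoK2 0 1 3 4 := by
  constructor <;> simp [pathGraph_adj]

theorem isInducedTwoK2_graphH2 : IsInducedTwoK2 graphH2 0 1 3 4 := by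
  constructor <;> simp [graphH2]

theorem isInducedTwoK2_graphH3 : IsInducedTwoK2 graphH3 0 1 3 4 := by
  constructor <;> simp [graphH3]

theorem twoK2Free_iff_forall_not_isInducedTwoK2 :
    TwoK2Free G ↔ ∀ a b c d, ¬ G.IsInducedTwoK2 a b c d := by
  simp only [TwoK2Free, not_exists]
  refine forall₄_congr fun a b c d => not_congr ⟨fun h => ?_, fun h => ?_⟩
  · obtain ⟨-, -, -, -, -, -, h⟩ := h
    exact ⟨h.1, h.2.1, h.2.2.1, h.2.2.2.1, h.2.2.2.2.1, h.2.2.2.2.2⟩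
  · exact ⟨h.adj_ab.ne, h.ne_ac, h.ne_ad, h.ne_bc, h.ne_bd, h.adj_cd.ne, h.adj_ab, h.adj_cd,
      h.not_adj_ac, h.not_adj_ad, h.not_adj_bc, h.not_adj_bd⟩

theorem Adj.dist_le_dist_add_one (h : G.Adj v w) : G.dist v u ≤ G.dist w u + 1 := by
  rw [dist_comm, dist_comm (u := w)]
  rcases h.symm.diff_dist_adj (u := u) with h | h | h <;> omega

theorem exists_adj_dist_add_one_eq (h : 0 < G.dist v u) :
    ∃ w, G.Adj v w ∧ G.dist w u + 1 = G.dist v u := by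
  obtain ⟨p, hp⟩ := (Reachable.of_dist_ne_zero h.ne').exists_walk_length_eq_dist
  cases p with
  | nil => simp at h
  | cons hvw q =>
    refine ⟨_, hvw, le_antisymm ?_ hvw.dist_le_dist_add_one⟩
    rw [← hp, Walk.length_cons]
    exact Nat.add_le_add_right (dist_le q) 1

theorem nonempty_embedding_of_adj_iff_of_lt {W : Type*} [LinearOrder W] {H : SimpleGraph W}
    {f : W → V} (hf : Function.Injective f)
    (hadj : ∀ i j, i < j → (H.Adj i j ↔ G.Adj (f i) (f j))) :
    Nonempty (H ↪g G) := by
  refine ⟨⟨⟨f, hf⟩, fun {i j} => show G.Adj (f i) (f j) ↔ H.Adj i j from ?_⟩⟩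
  rcases lt_trichotomy i j with hij | rfl | hij
  · exact (hadj i j hij).symm
  · simp
  · simpa only [adj_comm] using (hadj j i hij).symm

theorem IsInducedTwoK2.forbidden_of_adj_of_adj (h : G.IsInducedTwoK2 a b c d) (hbp : G.Adj b p)
    (hpc : G.Adj p c) :
    Nonempty (pathGraph 5 ↪g G) ∨ Nonempty (graphH2 ↪g G) ∨ Nonempty (graphH3 ↪g G) := by
  wlog hda : G.Adj p d → G.Adj a p generalizing a b c d
  · push Not at hda
    exact this h.reverse hpc.symm hbp.symm fun had => absurd had.symm hda.2
  have hne_pa : p ≠ a := by rintro rfl; exact h.not_adj_ac hpc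
  have hne_pd : p ≠ d := by rintro rfl; exact h.not_adj_bd hbp
  have hinj : Function.Injective ![a, b, p, c, d] := by
    rw [← List.nodup_ofFn]
    simp [h.adj_ab.ne, hne_pa.symm, h.ne_ac, h.ne_ad, hbp.ne, h.ne_bc, h.ne_bd, hpc.ne, hne_pd,
      h.adj_cd.ne]
  obtain ⟨hab, hcd, hac, had, hbc, hbd⟩ := h
  by_cases hap : G.Adj a p <;> by_cases hpd : G.Adj p d
  · refine .inr <| .inr <| nonempty_embedding_of_adj_iff_of_lt hinj fun i j hij => ?_
    fin_cases i <;> fin_cases j <;> simp at hij <;> simp [graphH3, *]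
  · refine .inr <| .inl <| nonempty_embedding_of_adj_iff_of_lt hinj fun i j hij => ?_
    fin_cases i <;> fin_cases j <;> simp at hij <;> simp [graphH2, *]
  · exact absurd (hda hpd) hap
  · refine .inl <| nonempty_embedding_of_adj_iff_of_lt hinj fun i j hij => ?_
    fin_cases i <;> fin_cases j <;> simp at hij <;> simp [pathGraph_adj, *]

theorem IsInducedTwoK2.exists_dist_le_two (h : G.IsInducedTwoK2 a b c d)
    (hba : G.dist b c ≤ G.dist a c) (h3 : 3 ≤ G.dist b c) :
    ∃ c' d', G.IsInducedTwoK2 a b c' d' ∧ G.dist b c' ≤ 2 := by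
  obtain ⟨p₁, hbp₁, hp₁⟩ := exists_adj_dist_add_one_eq (by omega : 0 < G.dist b c)
  obtain ⟨p₂, hp₁p₂, hp₂⟩ := exists_adj_dist_add_one_eq (by omega : 0 < G.dist p₁ c)
  obtain ⟨p₃, hp₂p₃, hp₃⟩ := exists_adj_dist_add_one_eq (by omega : 0 < G.dist p₂ c)
  have not_adj {x y : V} (hx : G.dist b c ≤ G.dist x c) (hy : G.dist y c + 2 ≤ G.dist b c) :
      ¬ G.Adj x y := fun hxy => by
    have := hxy.dist_le_dist_add_one (u := c)
    omega
  refine ⟨p₂, p₃, ⟨h.adj_ab, hp₂p₃, not_adj hba ?_, not_adj hba ?_, not_adj le_rfl ?_,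
    not_adj le_rfl ?_⟩, ?_⟩
  any_goals omega
  simpa using dist_le (.cons hbp₁ (.cons hp₁p₂ .nil))

theorem Connected.forbidden_of_isInducedTwoK2 (hconn : G.Connected)
    (h : G.IsInducedTwoK2 a b c d) :
    Nonempty (pathGraph 5 ↪g G) ∨ Nonempty (graphH2 ↪g G) ∨ Nonempty (graphH3 ↪g G) := by
  classical
  have hex : ∃ n, ∃ a b c d, G.IsInducedTwoK2 a b c d ∧ G.dist b c = n := ⟨_, a, b, c, d, h, rfl⟩
  obtain ⟨a, b, c, d, h, hn⟩ := Nat.find_spec hex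
  have hmin {a' b' c' d'} (h' : G.IsInducedTwoK2 a' b' c' d') : G.dist b c ≤ G.dist b' c' :=
    hn ▸ Nat.find_min' hex ⟨a', b', c', d', h', rfl⟩
  have hle : G.dist b c ≤ 2 := by
    by_contra! hlt
    obtain ⟨c', d', h', hc'⟩ := h.exists_dist_le_two (hmin h.swap_left) hlt
    have := hmin h'
    omega
  have hlt : 1 < G.dist b c := hconn.one_lt_dist_of_ne_of_not_adj h.ne_bc h.not_adj_bc
  obtain ⟨p, hbp, hpc⟩ := exists_adj_dist_add_one_eq (by omega : 0 < G.dist b c)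
  exact h.forbidden_of_adj_of_adj hbp (dist_eq_one_iff_adj.mp (by omega))

end SimpleGraph

theorem twoK2Free_iff_forbidden {V : Type*} (G : SimpleGraph V) (hconn : G.Connected) :
    TwoK2Free G ↔
      ¬ Nonempty (pathGraph 5 ↪g G) ∧ ¬ Nonempty (graphH2 ↪g G) ∧
        ¬ Nonempty (graphH3 ↪g G) := by
  rw [twoK2Free_iff_forall_not_isInducedTwoK2]
  constructor
  · intro h
    exact ⟨fun ⟨f⟩ => h _ _ _ _ (isInducedTwoK2_pathGraph_five.map f),
      fun ⟨f⟩ => h _ _ _ _ (isInducedTwoK2_graphH2.map f),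
      fun ⟨f⟩ => h _ _ _ _ (isInducedTwoK2_graphH3.map f)⟩
  · rintro ⟨hP₅, hH₂, hH₃⟩ a b c d h
    rcases hconn.forbidden_of_isInducedTwoK2 h with hP | hH | hH
    exacts [hP₅ hP, hH₂ hH, hH₃ hH]
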